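/- arXiv:2203.13446 — 2 statements merged into one kernel-verified Lean document; each statement's English description precedes it below -/
import Mathlib

section
/- Let T ≥ 1, Ḡ > 0, and Q > 0, and fix vectors φ_{ω,t} ∈ ℝ^K with ‖φ_{ω,t}‖_∞ ≤ Q and rewards g_{ω,t} ∈ [0, Ḡ] for ω ∈ [Ω], t ∈ [T]. Then the function Ĵ: (ℝ^K)^T → ℝ defined by Ĵ(b) = (1/Ω) Σ_{ω=1}^Ω Σ_{t=1}^T g_{ω,t} · ∏_{t'=1}^{t-1}(1 - σ(⟨b_{t'}, φ_{ω,t'}⟩)) · σ(⟨b_t, φ_{ω,t}⟩) is Lipschitz continuous with constant Ḡ·T²·Q with respect to the L¹ norm. -/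
/-!
The `t`-th summand is the probability that a process which stops at each time `s` with
probability `σ(⟨b_s, φ_s⟩)` stops first at `t`. Since `σ' = σ(1 - σ)`, the logistic function is
1-Lipschitz, and a product of factors in `[-1, 1]` moves, by telescoping, by at most the sum of
the moves of its factors; each argument `⟨b_s, φ_s⟩` moves by at most `Q ‖b_s - b'_s‖₁`. Summing
over `t` with weights at most `Ḡ` and averaging over `ω` gives the constant `Ḡ T Q ≤ Ḡ T² Q`.
-/

noncomputable def logistic (u : ℝ) : ℝ := Real.exp u / (1 + Real.exp u)

open Finset

theorem logistic_eq_sigmoid : logistic = Real.sigmoid := by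
  ext u
  rw [logistic, Real.sigmoid_def, Real.exp_neg]
  field_simp
  ring

theorem Real.lipschitzWith_one_sigmoid : LipschitzWith 1 Real.sigmoid := by
  refine lipschitzWith_of_nnnorm_deriv_le differentiable_sigmoid fun u => ?_
  rw [← NNReal.coe_le_coe, coe_nnnorm, Real.deriv_sigmoid, Real.norm_eq_abs, NNReal.coe_one,
    abs_le]
  constructor <;> nlinarith [Real.sigmoid_nonneg u, Real.sigmoid_le_one u]

theorem abs_logistic_sub_logistic_le (u v : ℝ) : |logistic u - logistic v| ≤ |u - v| := by
  simpa [logistic_eq_sigmoid, Real.dist_eq] using Real.lipschitzWith_one_sigmoid.dist_le_mul u v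

theorem abs_logistic_le_one (u : ℝ) : |logistic u| ≤ 1 := by
  rw [logistic_eq_sigmoid, abs_of_nonneg (Real.sigmoid_nonneg u)]
  exact Real.sigmoid_le_one u

theorem abs_one_sub_logistic_le_one (u : ℝ) : |1 - logistic u| ≤ 1 := by
  rw [logistic_eq_sigmoid, abs_le]
  constructor <;> linarith [Real.sigmoid_nonneg u, Real.sigmoid_le_one u]

section NormedRing

variable {R : Type*}

theorem norm_mul_sub_mul_le_of_norm_le_one [SeminormedRing R] {a b c d : R}
    (ha : ‖a‖ ≤ 1) (hd : ‖d‖ ≤ 1) : ‖a * c - b * d‖ ≤ ‖a - b‖ + ‖c - d‖ :=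
  calc ‖a * c - b * d‖ = ‖a * (c - d) + (a - b) * d‖ := by noncomm_ring
    _ ≤ ‖a‖ * ‖c - d‖ + ‖a - b‖ * ‖d‖ :=
      (norm_add_le _ _).trans (add_le_add (norm_mul_le _ _) (norm_mul_le _ _))
    _ ≤ ‖a - b‖ + ‖c - d‖ := by
      nlinarith [norm_nonneg (c - d), norm_nonneg (a - b), norm_nonneg a, norm_nonneg d]

theorem Finset.norm_prod_sub_prod_le_sum_norm_sub [NormedCommRing R] [NormOneClass R]
    {ι : Type*} (s : Finset ι) {f g : ι → R} (hf : ∀ i ∈ s, ‖f i‖ ≤ 1)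
    (hg : ∀ i ∈ s, ‖g i‖ ≤ 1) : ‖∏ i ∈ s, f i - ∏ i ∈ s, g i‖ ≤ ∑ i ∈ s, ‖f i - g i‖ := by
  induction s using Finset.cons_induction with
  | empty => simp
  | cons a s ha ih =>
    simp only [Finset.forall_mem_cons] at hf hg
    rw [prod_cons, prod_cons, sum_cons]
    refine (norm_mul_sub_mul_le_of_norm_le_one hf.1 ?_).trans (add_le_add_right (ih hf.2 hg.2) _)
    exact (norm_prod_le _ _).trans (prod_le_one (fun _ _ => norm_nonneg _) hg.2)

end NormedRing

section Stopping

variable {ι : Type*} [Fintype ι] [Preorder ι] [LocallyFiniteOrderBot ι]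

noncomputable def firstStopProb (x : ι → ℝ) (t : ι) : ℝ :=
  (∏ s ∈ Iio t, (1 - logistic (x s))) * logistic (x t)

theorem abs_firstStopProb_sub_le (x x' : ι → ℝ) (t : ι) :
    |firstStopProb x t - firstStopProb x' t| ≤ ∑ s, |x s - x' s| := by
  have hprod : |∏ s ∈ Iio t, (1 - logistic (x s)) - ∏ s ∈ Iio t, (1 - logistic (x' s))|
      ≤ ∑ s ∈ Iio t, |x s - x' s| := by
    refine (norm_prod_sub_prod_le_sum_norm_sub (R := ℝ) (Iio t)
      (fun s _ => abs_one_sub_logistic_le_one (x s))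
      (fun s _ => abs_one_sub_logistic_le_one (x' s))).trans (sum_le_sum fun s _ => ?_)
    rw [Real.norm_eq_abs, sub_sub_sub_cancel_left, abs_sub_comm]
    exact abs_logistic_sub_logistic_le _ _
  have hprod_le_one : |∏ s ∈ Iio t, (1 - logistic (x s))| ≤ 1 := by
    rw [abs_prod]
    exact prod_le_one (fun _ _ => abs_nonneg _) fun _ _ => abs_one_sub_logistic_le_one _
  have hnotMem : t ∉ Iio t := by simp
  calc |firstStopProb x t - firstStopProb x' t|
      ≤ ∑ s ∈ Iio t, |x s - x' s| + |x t - x' t| := by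
        unfold firstStopProb
        exact (norm_mul_sub_mul_le_of_norm_le_one (R := ℝ) hprod_le_one
          (abs_logistic_le_one _)).trans (add_le_add hprod (abs_logistic_sub_logistic_le _ _))
    _ = ∑ s ∈ cons t (Iio t) hnotMem, |x s - x' s| := by rw [sum_cons, add_comm]
    _ ≤ ∑ s, |x s - x' s| :=
        sum_le_sum_of_subset_of_nonneg (subset_univ _) fun _ _ _ => abs_nonneg _

end Stopping

theorem abs_sum_sub_sum_le_card_mul {ι : Type*} [Fintype ι] {f g : ι → ℝ} {C : ℝ}
    (h : ∀ i, |f i - g i| ≤ C) : |∑ i, f i - ∑ i, g i| ≤ Fintype.card ι * C := by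
  rw [← sum_sub_distrib, ← nsmul_eq_mul]
  exact (abs_sum_le_sum_abs _ _).trans (sum_le_card_nsmul _ _ _ fun i _ => h i)

theorem abs_mean_sub_mean_le {n : ℕ} {F F' : Fin n → ℝ} {C : ℝ} (hC : 0 ≤ C)
    (h : ∀ i, |F i - F' i| ≤ C) :
    |1 / (n : ℝ) * ∑ i, F i - 1 / (n : ℝ) * ∑ i, F' i| ≤ C := by
  rw [← mul_sub, abs_mul, abs_of_nonneg (by positivity)]
  rcases Nat.eq_zero_or_pos n with rfl | hn
  · simpa using hC
  · calc 1 / (n : ℝ) * |∑ i, F i - ∑ i, F' i| ≤ 1 / n * (n * C) := by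
          gcongr
          simpa using abs_sum_sub_sum_le_card_mul h
      _ = C := by field_simp

theorem abs_sum_mul_sub_sum_mul_le {ι : Type*} [Fintype ι] {φ : ι → ℝ} {Q : ℝ}
    (hφ : ∀ k, |φ k| ≤ Q) (b b' : ι → ℝ) :
    |∑ k, b k * φ k - ∑ k, b' k * φ k| ≤ Q * ∑ k, |b k - b' k| := by
  rw [← sum_sub_distrib, mul_sum]
  refine (abs_sum_le_sum_abs _ _).trans (sum_le_sum fun k _ => ?_)
  rw [← sub_mul, abs_mul, mul_comm]
  exact mul_le_mul_of_nonneg_right (hφ k) (abs_nonneg _)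

theorem abs_sum_mul_firstStopProb_sub_le {ι : Type*} [Fintype ι] [Preorder ι]
    [LocallyFiniteOrderBot ι] {r : ι → ℝ} {G : ℝ} (hr : ∀ t, r t ∈ Set.Icc 0 G) (x x' : ι → ℝ) :
    |∑ t, r t * firstStopProb x t - ∑ t, r t * firstStopProb x' t|
      ≤ Fintype.card ι * (G * ∑ s, |x s - x' s|) := by
  refine abs_sum_sub_sum_le_card_mul fun t => ?_
  rw [← mul_sub, abs_mul, abs_of_nonneg (hr t).1]
  exact mul_le_mul (hr t).2 (abs_firstStopProb_sub_le x x' t) (abs_nonneg _)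
    ((hr t).1.trans (hr t).2)

theorem SAA_objective_lipschitz (Ω T K : ℕ) (hT : 1 ≤ T) (Gbar Q : ℝ)
    (hG : 0 < Gbar) (hQ : 0 < Q)
    (φ : Fin Ω → Fin T → Fin K → ℝ)
    (hφ : ∀ ω t k, |φ ω t k| ≤ Q)
    (g : Fin Ω → Fin T → ℝ)
    (hg : ∀ ω t, g ω t ∈ Set.Icc (0 : ℝ) Gbar) :
    ∀ b b' : Fin T → Fin K → ℝ,
      |(1 / (Ω : ℝ)) * ∑ ω, ∑ t, g ω t *
          ((∏ t' ∈ Finset.Iio t, (1 - logistic (∑ k, b t' k * φ ω t' k))) *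
            logistic (∑ k, b t k * φ ω t k)) -
        (1 / (Ω : ℝ)) * ∑ ω, ∑ t, g ω t *
          ((∏ t' ∈ Finset.Iio t, (1 - logistic (∑ k, b' t' k * φ ω t' k))) *
            logistic (∑ k, b' t k * φ ω t k))| ≤
      Gbar * (T : ℝ) ^ 2 * Q * (∑ s, ∑ k, |b s k - b' s k|) := by
  intro b b'
  set S := ∑ s, ∑ k, |b s k - b' s k|
  have hscore : ∀ ω, ∑ s, |∑ k, b s k * φ ω s k - ∑ k, b' s k * φ ω s k| ≤ Q * S := fun ω => by
    rw [mul_sum]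
    exact sum_le_sum fun s _ => abs_sum_mul_sub_sum_mul_le (hφ ω s) (b s) (b' s)
  have hscenario : ∀ ω,
      |∑ t, g ω t * firstStopProb (fun s => ∑ k, b s k * φ ω s k) t
        - ∑ t, g ω t * firstStopProb (fun s => ∑ k, b' s k * φ ω s k) t| ≤ T * (Gbar * (Q * S)) :=
    fun ω => by
      have h := abs_sum_mul_firstStopProb_sub_le (hg ω) (fun s => ∑ k, b s k * φ ω s k)
        (fun s => ∑ k, b' s k * φ ω s k)
      rw [Fintype.card_fin] at h
      exact h.trans (by gcongr; exact hscore ω)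
  have hT_le_sq : (T : ℝ) ≤ T ^ 2 := by
    nlinarith [show (1 : ℝ) ≤ T by exact_mod_cast hT]
  calc _ ≤ T * (Gbar * (Q * S)) := abs_mean_sub_mean_le (by positivity) hscenario
    _ = Gbar * Q * S * T := by ring
    _ ≤ Gbar * Q * S * T ^ 2 := by gcongr
    _ = Gbar * T ^ 2 * Q * S := by ring
end

section
/- Let T ≥ 1 and Ḡ ≥ 0. Define Γ: ℝ^T × [0, Ḡ]^T → ℝ by Γ(u, v) = Σ_{t=1}^T v_t · ∏_{t'=1}^{t-1}(1 - σ(u_{t'})) · σ(u_t). Then the gradient of Γ satisfies ‖∇Γ(u,v)‖_2 ≤ Ḡ + 1 at every point, and consequently Γ is Lipschitz continuous with constant Ḡ + 1 with respect to the L² norm on ℝ^{2T}. -/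
/-- The realization-to-reward map `Γ(u, v) = ∑_t v_t ∏_{t'<t}(1-σ(u_{t'})) σ(u_t)`,
viewed as a function on `ℝ^{2T}` with the Euclidean (L²) norm; the first `T`
coordinates (indexed by `Sum.inl`) are `u` and the last `T` (indexed by
`Sum.inr`) are `v`. -/
noncomputable def Gamma (T : ℕ) (x : EuclideanSpace ℝ (Fin T ⊕ Fin T)) : ℝ :=
  ∑ t : Fin T, x (Sum.inr t) *
    ((∏ t' ∈ Finset.Iio t, (1 - logistic (x (Sum.inl t')))) * logistic (x (Sum.inl t)))

/-!
Write `σ_t = σ(u_t)` and `p_t = σ_t ∏_{j<t} (1 - σ_j)`: the probability of stopping exactly at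
time `t` when `σ_t` is the hazard of stopping at `t`. These telescope,
`∑_{t ≤ s} p_t = 1 - ∏_{j ≤ s} (1 - σ_j)`, so `p_t ≥ 0`, `∑_t p_t ≤ 1` and
`∑_{t > s} p_t ≤ (1 - σ_s) ∏_{j<s} (1 - σ_j)`.

Since `σ' = σ (1 - σ)`, the gradient of `Γ` is `∂Γ/∂v_t = p_t` and
`∂Γ/∂u_s = v_s (1 - σ_s) p_s - σ_s ∑_{t>s} v_t p_t`. For `v ∈ [0, Ḡ]^T` both terms of the latter
lie in `[0, Ḡ p_s]`, by the tail bound for the second one. Hence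
`‖∇Γ‖² ≤ (Ḡ² + 1) ∑_t p_t² ≤ (Ḡ + 1)²`, and the Lipschitz bound follows from the mean value
inequality on the convex set `{v ∈ [0, Ḡ]^T}`.
-/

open Finset

section StoppingProbabilities

variable {ι R : Type*} [LinearOrder ι] [LocallyFiniteOrderBot ι] [CommRing R]

def survival (c : ι → R) (t : ι) : R := ∏ j ∈ Iio t, (1 - c j)

def stopProb (c : ι → R) (t : ι) : R := survival c t * c t

lemma prod_Iic_one_sub (c : ι → R) (s : ι) :
    ∏ j ∈ Iic s, (1 - c j) = (1 - c s) * survival c s := by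
  classical
  rw [← Iio_insert, prod_insert notMem_Iio_self, survival]

lemma sum_Iic_stopProb (c : ι → R) (s : ι) :
    ∑ t ∈ Iic s, stopProb c t = 1 - (1 - c s) * survival c s := by
  classical
  rw [← prod_Iic_one_sub, prod_one_sub_ordered, sub_sub_cancel]
  refine sum_congr rfl fun t ht => ?_
  have : {j ∈ Iic s | j < t} = Iio t := by
    ext j
    simp only [mem_filter, mem_Iic, mem_Iio, and_iff_right_iff_imp]
    exact fun hj => hj.le.trans (mem_Iic.1 ht)
  rw [stopProb, survival, this, mul_comm]

lemma sum_stopProb [Fintype ι] (c : ι → R) :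
    ∑ t, stopProb c t = 1 - ∏ j, (1 - c j) := by
  classical
  rw [prod_one_sub_ordered, sub_sub_cancel]
  refine sum_congr rfl fun t _ => ?_
  rw [stopProb, survival, filter_gt_eq_Iio, mul_comm]

lemma sum_mul_sum_Iio_eq_sum_mul_sum_Ioi [Fintype ι] [LocallyFiniteOrderTop ι] (a b : ι → R) :
    ∑ t, a t * ∑ s ∈ Iio t, b s = ∑ s, b s * ∑ t ∈ Ioi s, a t := by
  simp only [mul_sum]
  rw [sum_comm' (t' := univ) (s' := Ioi)]
  · exact sum_congr rfl fun _ _ => sum_congr rfl fun _ _ => mul_comm _ _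
  · simp

variable [PartialOrder R] [IsOrderedRing R] {c : ι → R}

lemma survival_nonneg (hc : ∀ t, c t ≤ 1) (t : ι) : 0 ≤ survival c t :=
  prod_nonneg fun j _ => sub_nonneg.2 (hc j)

lemma stopProb_nonneg (hc₀ : ∀ t, 0 ≤ c t) (hc₁ : ∀ t, c t ≤ 1) (t : ι) :
    0 ≤ stopProb c t :=
  mul_nonneg (survival_nonneg hc₁ t) (hc₀ t)

variable [Fintype ι]

lemma sum_stopProb_le_one (hc : ∀ t, c t ≤ 1) : ∑ t, stopProb c t ≤ 1 := by
  rw [sum_stopProb, sub_le_self_iff]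
  exact prod_nonneg fun j _ => sub_nonneg.2 (hc j)

lemma sum_sq_stopProb_le_one (hc₀ : ∀ t, 0 ≤ c t) (hc₁ : ∀ t, c t ≤ 1) :
    ∑ t, stopProb c t ^ 2 ≤ 1 :=
  (sum_sq_le_sq_sum_of_nonneg fun t _ => stopProb_nonneg hc₀ hc₁ t).trans
    (pow_le_one₀ (sum_nonneg fun t _ => stopProb_nonneg hc₀ hc₁ t) (sum_stopProb_le_one hc₁))

lemma sum_Ioi_stopProb_le [LocallyFiniteOrderTop ι] (hc : ∀ t, c t ≤ 1) (s : ι) :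
    ∑ t ∈ Ioi s, stopProb c t ≤ (1 - c s) * survival c s := by
  classical
  have hsplit := sum_filter_add_sum_filter_not univ (· ≤ s) (stopProb c)
  rw [filter_ge_eq_Iic, sum_Iic_stopProb, sum_stopProb] at hsplit
  simp only [not_le, filter_lt_eq_Ioi] at hsplit
  have hprod : 0 ≤ ∏ j, (1 - c j) := prod_nonneg fun j _ => sub_nonneg.2 (hc j)
  linear_combination hsplit + hprod

end StoppingProbabilities

section Logistic

lemma logistic_nonneg (u : ℝ) : 0 ≤ logistic u := by
  unfold logistic; positivity

lemma logistic_le_one (u : ℝ) : logistic u ≤ 1 := by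
  unfold logistic
  rw [div_le_one (by positivity)]
  linarith

lemma hasDerivAt_logistic (u : ℝ) :
    HasDerivAt logistic (logistic u * (1 - logistic u)) u := by
  have h : 1 + Real.exp u ≠ 0 := by positivity
  refine ((Real.hasDerivAt_exp u).div
    ((hasDerivAt_const u 1).add (Real.hasDerivAt_exp u)) h).congr_deriv ?_
  simp only [logistic, Pi.add_apply]
  field_simp
  ring

variable {E ι : Type*} [NormedAddCommGroup E] [NormedSpace ℝ E]

-- `(1 - σ)' = -σ (1 - σ)`: each factor has logarithmic derivative `-σ`.
lemma hasFDerivAt_prod_one_sub_logistic {f : ι → E → ℝ} {f' : ι → E →L[ℝ] ℝ} {x : E}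
    (S : Finset ι) (hf : ∀ j ∈ S, HasFDerivAt (f j) (f' j) x) :
    HasFDerivAt (fun y => ∏ j ∈ S, (1 - logistic (f j y)))
      (-(∏ j ∈ S, (1 - logistic (f j x))) • ∑ j ∈ S, logistic (f j x) • f' j) x := by
  classical
  refine (HasFDerivAt.finsetProd fun j hj =>
    ((hasDerivAt_logistic (f j x)).comp_hasFDerivAt x (hf j hj)).const_sub 1).congr_fderiv ?_
  rw [Finset.smul_sum]
  refine Finset.sum_congr rfl fun j hj => ?_
  rw [← Finset.mul_prod_erase S _ hj, smul_neg, ← neg_smul, smul_smul, smul_smul]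
  congr 1
  simp only [Function.comp_apply]
  ring

end Logistic

noncomputable section Gamma

variable {T : ℕ}

-- With these hazards, `Gamma T x = ∑ t, x (Sum.inr t) * stopProb (hazard x) t` holds by `rfl`.
def hazard (x : EuclideanSpace ℝ (Fin T ⊕ Fin T)) (t : Fin T) : ℝ := logistic (x (Sum.inl t))

lemma hazard_nonneg (x : EuclideanSpace ℝ (Fin T ⊕ Fin T)) (t : Fin T) : 0 ≤ hazard x t :=
  logistic_nonneg _

lemma hazard_le_one (x : EuclideanSpace ℝ (Fin T ⊕ Fin T)) (t : Fin T) : hazard x t ≤ 1 :=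
  logistic_le_one _

def gammaGrad (x : EuclideanSpace ℝ (Fin T ⊕ Fin T)) : EuclideanSpace ℝ (Fin T ⊕ Fin T) :=
  WithLp.toLp 2 (Sum.elim
    (fun s => x (Sum.inr s) * (1 - hazard x s) * stopProb (hazard x) s
      - hazard x s * ∑ t ∈ Ioi s, x (Sum.inr t) * stopProb (hazard x) t)
    (stopProb (hazard x)))

lemma hasFDerivAt_coord (x : EuclideanSpace ℝ (Fin T ⊕ Fin T)) (i : Fin T ⊕ Fin T) :
    HasFDerivAt (fun y : EuclideanSpace ℝ (Fin T ⊕ Fin T) => y i)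
      (EuclideanSpace.proj i : StrongDual ℝ (EuclideanSpace ℝ (Fin T ⊕ Fin T))) x :=
  (EuclideanSpace.proj (𝕜 := ℝ) (ι := Fin T ⊕ Fin T) i).hasFDerivAt

lemma hasFDerivAt_stopProb_hazard (x : EuclideanSpace ℝ (Fin T ⊕ Fin T)) (t : Fin T) :
    HasFDerivAt (fun y => stopProb (hazard y) t)
      (stopProb (hazard x) t • ((1 - hazard x t) • EuclideanSpace.proj (𝕜 := ℝ) (Sum.inl t)
        - ∑ s ∈ Iio t, hazard x s • EuclideanSpace.proj (𝕜 := ℝ) (Sum.inl s))) x := by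
  refine ((hasFDerivAt_prod_one_sub_logistic (Iio t) fun s _ => hasFDerivAt_coord x _).mul
    ((hasDerivAt_logistic _).comp_hasFDerivAt x (hasFDerivAt_coord x _))).congr_fderiv ?_
  simp only [stopProb, survival, hazard, Function.comp_apply]
  module

lemma hasFDerivAt_Gamma (x : EuclideanSpace ℝ (Fin T ⊕ Fin T)) :
    HasFDerivAt (Gamma T) (innerSL ℝ (gammaGrad x)) x := by
  refine (HasFDerivAt.fun_sum fun t _ =>
    (hasFDerivAt_coord x (Sum.inr t)).mul (hasFDerivAt_stopProb_hazard x t)).congr_fderiv ?_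
  refine ContinuousLinearMap.ext fun h => ?_
  have hswap := sum_mul_sum_Iio_eq_sum_mul_sum_Ioi
    (fun t => x (Sum.inr t) * stopProb (hazard x) t) (fun s => hazard x s * h (Sum.inl s))
  simp only [_root_.sum_apply, add_apply, smul_apply, sub_apply, PiLp.proj_apply, smul_eq_mul,
    gammaGrad, coe_innerSL_apply, PiLp.inner_apply, RCLike.inner_apply, Real.ringHom_apply,
    Fintype.sum_sum_type, Sum.elim_inl, Sum.elim_inr] at hswap ⊢
  rw [← sum_add_distrib, ← sub_eq_zero, ← sum_sub_distrib, ← sub_eq_zero.2 hswap.symm,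
    ← sum_sub_distrib]
  exact sum_congr rfl fun t _ => by ring

end Gamma

section GammaBounds

variable {T : ℕ} {Gbar : ℝ} {x : EuclideanSpace ℝ (Fin T ⊕ Fin T)}

lemma abs_gammaGrad_inl_le (hv : ∀ t, x (Sum.inr t) ∈ Set.Icc 0 Gbar) (s : Fin T) :
    |gammaGrad x (Sum.inl s)| ≤ Gbar * stopProb (hazard x) s := by
  set σ := hazard x
  set p := stopProb σ
  have hσ₀ := hazard_nonneg x s
  have hσ₁ := hazard_le_one x s
  have hp : ∀ t, 0 ≤ p t := stopProb_nonneg (hazard_nonneg x) (hazard_le_one x)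
  have hG : 0 ≤ Gbar := (hv s).1.trans (hv s).2
  have hbound : Gbar * (1 - σ s) * p s ≤ Gbar * p s :=
    mul_le_mul_of_nonneg_right (mul_le_of_le_one_right hG (sub_le_self _ hσ₀)) (hp s)
  have htail_sum : ∑ t ∈ Ioi s, x (Sum.inr t) * p t ≤ Gbar * ((1 - σ s) * survival σ s) :=
    calc ∑ t ∈ Ioi s, x (Sum.inr t) * p t
        ≤ ∑ t ∈ Ioi s, Gbar * p t :=
          sum_le_sum fun t _ => mul_le_mul_of_nonneg_right (hv t).2 (hp t)
      _ = Gbar * ∑ t ∈ Ioi s, p t := (mul_sum _ _ _).symm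
      _ ≤ Gbar * ((1 - σ s) * survival σ s) :=
          mul_le_mul_of_nonneg_left (sum_Ioi_stopProb_le (hazard_le_one x) s) hG
  have htail : σ s * ∑ t ∈ Ioi s, x (Sum.inr t) * p t ≤ Gbar * (1 - σ s) * p s :=
    (mul_le_mul_of_nonneg_left htail_sum hσ₀).trans_eq (by simp only [p, stopProb]; ring)
  refine (abs_sub_le_of_nonneg_of_le ?_ ?_ ?_ htail).trans hbound
  · exact mul_nonneg (mul_nonneg (hv s).1 (sub_nonneg.2 hσ₁)) (hp s)
  · exact mul_le_mul_of_nonneg_right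
      (mul_le_mul_of_nonneg_right (hv s).2 (sub_nonneg.2 hσ₁)) (hp s)
  · exact mul_nonneg hσ₀ (sum_nonneg fun t _ => mul_nonneg (hv t).1 (hp t))

lemma norm_gammaGrad_le (hG : 0 ≤ Gbar) (hv : ∀ t, x (Sum.inr t) ∈ Set.Icc 0 Gbar) :
    ‖gammaGrad x‖ ≤ Gbar + 1 := by
  have hp := sum_sq_stopProb_le_one (hazard_nonneg x) (hazard_le_one x)
  have hinl : ∑ s, gammaGrad x (Sum.inl s) ^ 2 ≤ Gbar ^ 2 * ∑ s, stopProb (hazard x) s ^ 2 := by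
    rw [mul_sum]
    refine sum_le_sum fun s _ => ?_
    have h := abs_gammaGrad_inl_le hv s
    rw [← mul_pow]
    exact sq_le_sq' (neg_le_of_abs_le h) (le_of_abs_le h)
  rw [EuclideanSpace.norm_eq, Real.sqrt_le_left (by positivity), Fintype.sum_sum_type]
  have hinr : ∑ t, gammaGrad x (Sum.inr t) ^ 2 = ∑ t, stopProb (hazard x) t ^ 2 := rfl
  simp only [Real.norm_eq_abs, sq_abs]
  nlinarith

end GammaBounds

theorem Gamma_gradient_bound_and_lipschitz_general (T : ℕ) (Gbar : ℝ)
    (hG : 0 ≤ Gbar) :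
    (∀ x : EuclideanSpace ℝ (Fin T ⊕ Fin T),
      (∀ t : Fin T, x (Sum.inr t) ∈ Set.Icc (0 : ℝ) Gbar) →
      ‖fderiv ℝ (Gamma T) x‖ ≤ Gbar + 1) ∧
    (∀ x y : EuclideanSpace ℝ (Fin T ⊕ Fin T),
      (∀ t : Fin T, x (Sum.inr t) ∈ Set.Icc (0 : ℝ) Gbar) →
      (∀ t : Fin T, y (Sum.inr t) ∈ Set.Icc (0 : ℝ) Gbar) →
      |Gamma T x - Gamma T y| ≤ (Gbar + 1) * ‖x - y‖) := by
  have hderiv : ∀ x : EuclideanSpace ℝ (Fin T ⊕ Fin T),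
      (∀ t : Fin T, x (Sum.inr t) ∈ Set.Icc (0 : ℝ) Gbar) →
      ‖fderiv ℝ (Gamma T) x‖ ≤ Gbar + 1 := fun x hx => by
    rw [(hasFDerivAt_Gamma x).fderiv, innerSL_apply_norm]
    exact norm_gammaGrad_le hG hx
  have hconvex : Convex ℝ
      {z : EuclideanSpace ℝ (Fin T ⊕ Fin T) | ∀ t, z (Sum.inr t) ∈ Set.Icc (0 : ℝ) Gbar} := by
    simp only [Set.ofPred_forall]
    exact convex_iInter fun t =>
      (convex_Icc 0 Gbar).linear_preimage (EuclideanSpace.projₗ (Sum.inr t))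
  refine ⟨hderiv, fun x y hx hy => ?_⟩
  rw [← Real.norm_eq_abs]
  exact hconvex.norm_image_sub_le_of_norm_fderiv_le
    (fun z _ => (hasFDerivAt_Gamma z).differentiableAt) hderiv hy hx

theorem Gamma_gradient_bound_and_lipschitz (T : ℕ) (hT : 1 ≤ T) (Gbar : ℝ)
    (hG : 0 ≤ Gbar) :
    (∀ x : EuclideanSpace ℝ (Fin T ⊕ Fin T),
      (∀ t : Fin T, x (Sum.inr t) ∈ Set.Icc (0 : ℝ) Gbar) →
      ‖fderiv ℝ (Gamma T) x‖ ≤ Gbar + 1) ∧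
    (∀ x y : EuclideanSpace ℝ (Fin T ⊕ Fin T),
      (∀ t : Fin T, x (Sum.inr t) ∈ Set.Icc (0 : ℝ) Gbar) →
      (∀ t : Fin T, y (Sum.inr t) ∈ Set.Icc (0 : ℝ) Gbar) →
      |Gamma T x - Gamma T y| ≤ (Gbar + 1) * ‖x - y‖) :=
  Gamma_gradient_bound_and_lipschitz_general T Gbar hG
end
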